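/- Let 𝔤 be a finite-dimensional real Lie algebra with an invariant inner product ⟨·,·⟩ (i.e. ⟨⁅z,x⁆,y⟩ + ⟨x,⁅z,y⁆⟩ = 0 for all x,y,z ∈ 𝔤). Let 𝔨 ⊆ 𝔤 be a Lie subalgebra and 𝔥 ⊆ 𝔨 an ideal of 𝔨; let 𝔪₀ be the orthogonal complement of 𝔥 in 𝔨 and 𝔪′ the orthogonal complement of 𝔨 in 𝔤. Assume 𝔪′ is a nonzero irreducible 𝔨-module under the adjoint action (the only subspaces W ⊆ 𝔪′ with ⁅𝔨, W⁆ ⊆ W are 0 and 𝔪′), and assume 𝔥 is not an ideal of 𝔤. Then any vector v ∈ 𝔪′ satisfying ⁅v, w⁆ = 0 for all w ∈ 𝔥 must be 0. -/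

import Mathlib

/-!
The part of `𝔪′` that centralizes `𝔥` is a `𝔨`-submodule: `𝔪′` is `ad 𝔨`-stable because the form
is invariant, and the centralizer of `𝔥` is `ad 𝔨`-stable by the Jacobi identity because `𝔥` is an
ideal of `𝔨`. By irreducibility it is `0` or all of `𝔪′`. In the second case `𝔪′` centralizes `𝔥`
and `𝔨` normalizes it, so `𝔤 = 𝔨 ⊕ 𝔪′` normalizes `𝔥`, i.e. `𝔥` is an ideal of `𝔤`.
-/

namespace Submodule

variable {R L : Type*} [CommRing R] [LieRing L] [LieAlgebra R L]

def lieCentralizer (𝔥 : Submodule R L) : Submodule R L where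
  carrier := {v | ∀ w ∈ 𝔥, ⁅v, w⁆ = 0}
  zero_mem' w _ := zero_lie w
  add_mem' {x y} hx hy w hw := by rw [add_lie, hx w hw, hy w hw, add_zero]
  smul_mem' c x hx w hw := by rw [smul_lie, hx w hw, smul_zero]

variable {𝔥 : Submodule R L}

theorem lie_mem_lieCentralizer {x v : L} (hx : ∀ y ∈ 𝔥, ⁅x, y⁆ ∈ 𝔥)
    (hv : v ∈ 𝔥.lieCentralizer) : ⁅x, v⁆ ∈ 𝔥.lieCentralizer := fun w hw => by
  rw [lie_lie, hv w hw, hv _ (hx w hw), lie_zero, sub_zero]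

theorem lie_mem_of_sup_eq_top {𝔨 𝔪 : Submodule R L} (hsup : 𝔨 ⊔ 𝔪 = ⊤)
    (h𝔨 : ∀ x ∈ 𝔨, ∀ y ∈ 𝔥, ⁅x, y⁆ ∈ 𝔥) (h𝔪 : 𝔪 ≤ 𝔥.lieCentralizer) (x : L) {y : L}
    (hy : y ∈ 𝔥) : ⁅x, y⁆ ∈ 𝔥 := by
  obtain ⟨k, hk, m, hm, rfl⟩ := mem_sup.1 (hsup ▸ mem_top : x ∈ 𝔨 ⊔ 𝔪)
  rw [add_lie, h𝔪 hm y hy, add_zero]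
  exact h𝔨 k hk y hy

end Submodule

namespace LinearMap.BilinForm

theorem lie_mem_orthogonal {R L : Type*} [CommRing R] [LieRing L] [LieAlgebra R L]
    {B : LinearMap.BilinForm R L} (hB : ∀ x y z : L, B ⁅z, x⁆ y + B x ⁅z, y⁆ = 0)
    {𝔨 : Submodule R L} {x v : L} (hx : ∀ y ∈ 𝔨, ⁅x, y⁆ ∈ 𝔨) (hv : v ∈ B.orthogonal 𝔨) :
    ⁅x, v⁆ ∈ B.orthogonal 𝔨 := fun n hn => by
  have := hB n v x
  rwa [hv _ (hx n hn), zero_add] at this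

theorem sup_orthogonal_eq_top {K V : Type*} [Field K] [AddCommGroup V] [Module K V]
    [FiniteDimensional K V] {B : LinearMap.BilinForm K V} (hrefl : B.IsRefl)
    (hB : ∀ x : V, B x x = 0 → x = 0) (W : Submodule K V) : W ⊔ B.orthogonal W = ⊤ :=
  ((isCompl_orthogonal_iff_disjoint hrefl).2 <| Submodule.disjoint_def.2 fun x hxW hxW' =>
    hB x (hxW' x hxW)).sup_eq_top

end LinearMap.BilinForm

open LinearMap.BilinForm Submodule

theorem eq_zero_of_centralizes_h_general
    {L : Type*} [LieRing L] [LieAlgebra ℝ L] [FiniteDimensional ℝ L]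
    (B : L →ₗ[ℝ] L →ₗ[ℝ] ℝ)
    (hBsymm : ∀ x y : L, B x y = B y x)
    (hBpos : ∀ x : L, x ≠ 0 → 0 < B x x)
    (hBinv : ∀ x y z : L, B ⁅z, x⁆ y + B x ⁅z, y⁆ = 0)
    (𝔨 : Submodule ℝ L) (h𝔨 : ∀ x ∈ 𝔨, ∀ y ∈ 𝔨, ⁅x, y⁆ ∈ 𝔨)
    (𝔥 : Submodule ℝ L)
    (h𝔥ideal : ∀ x ∈ 𝔨, ∀ y ∈ 𝔥, ⁅x, y⁆ ∈ 𝔥)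
    (𝔪' : Submodule ℝ L)
    (h𝔪' : ∀ v : L, v ∈ 𝔪' ↔ ∀ w ∈ 𝔨, B v w = 0)
    (h𝔪'irr : ∀ W : Submodule ℝ L, W ≤ 𝔪' →
      (∀ x ∈ 𝔨, ∀ v ∈ W, ⁅x, v⁆ ∈ W) → W = ⊥ ∨ W = 𝔪')
    (h𝔥notideal : ¬ (∀ x : L, ∀ v ∈ 𝔥, ⁅x, v⁆ ∈ 𝔥)) :
    ∀ v ∈ 𝔪', (∀ w ∈ 𝔥, ⁅v, w⁆ = 0) → v = 0 := by
  have h𝔪'_eq : 𝔪' = orthogonal B 𝔨 := by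
    ext v
    simp only [h𝔪', mem_orthogonal_iff, hBsymm v]
  have hW : ∀ x ∈ 𝔨, ∀ v ∈ 𝔪' ⊓ 𝔥.lieCentralizer, ⁅x, v⁆ ∈ 𝔪' ⊓ 𝔥.lieCentralizer :=
    fun x hx v hv => ⟨h𝔪'_eq ▸ lie_mem_orthogonal hBinv (h𝔨 x hx) (h𝔪'_eq ▸ hv.1),
      lie_mem_lieCentralizer (h𝔥ideal x hx) hv.2⟩
  rcases h𝔪'irr _ inf_le_left hW with hbot | htop
  · intro v hv hcen
    simpa [hbot] using (show v ∈ 𝔪' ⊓ 𝔥.lieCentralizer from ⟨hv, hcen⟩)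
  · have hanis : ∀ x, B x x = 0 → x = 0 := fun x hx => by_contra fun hx0 => (hBpos x hx0).ne' hx
    have hsup : 𝔨 ⊔ 𝔪' = ⊤ :=
      h𝔪'_eq ▸ sup_orthogonal_eq_top (fun x y h => (hBsymm y x).trans h) hanis 𝔨
    exact absurd (fun x _ hy => lie_mem_of_sup_eq_top hsup h𝔥ideal
      (htop ▸ inf_le_right) x hy) h𝔥notideal

/-- **Lemma 2, second part.**
With `𝔤, B, 𝔨, 𝔥, 𝔪₀, 𝔪′` as in the orthogonal reductive decomposition, if `𝔪′` is a
nonzero irreducible `𝔨`-module under the adjoint action and `𝔥` is not an ideal of `𝔤`,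
then any `v ∈ 𝔪′` with `⁅v, 𝔥⁆ = 0` must vanish. -/
theorem eq_zero_of_centralizes_h
    {L : Type*} [LieRing L] [LieAlgebra ℝ L] [FiniteDimensional ℝ L]
    (B : L →ₗ[ℝ] L →ₗ[ℝ] ℝ)
    (hBsymm : ∀ x y : L, B x y = B y x)
    (hBpos : ∀ x : L, x ≠ 0 → 0 < B x x)
    (hBinv : ∀ x y z : L, B ⁅z, x⁆ y + B x ⁅z, y⁆ = 0)
    (𝔨 : Submodule ℝ L) (h𝔨 : ∀ x ∈ 𝔨, ∀ y ∈ 𝔨, ⁅x, y⁆ ∈ 𝔨)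
    (𝔥 : Submodule ℝ L) (h𝔥𝔨 : 𝔥 ≤ 𝔨)
    (h𝔥ideal : ∀ x ∈ 𝔨, ∀ y ∈ 𝔥, ⁅x, y⁆ ∈ 𝔥)
    (𝔪₀ : Submodule ℝ L)
    (h𝔪₀ : ∀ v : L, v ∈ 𝔪₀ ↔ v ∈ 𝔨 ∧ ∀ w ∈ 𝔥, B v w = 0)
    (𝔪' : Submodule ℝ L)
    (h𝔪' : ∀ v : L, v ∈ 𝔪' ↔ ∀ w ∈ 𝔨, B v w = 0)
    (h𝔪'ne : 𝔪' ≠ ⊥)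
    (h𝔪'irr : ∀ W : Submodule ℝ L, W ≤ 𝔪' →
      (∀ x ∈ 𝔨, ∀ v ∈ W, ⁅x, v⁆ ∈ W) → W = ⊥ ∨ W = 𝔪')
    (h𝔥notideal : ¬ (∀ x : L, ∀ v ∈ 𝔥, ⁅x, v⁆ ∈ 𝔥)) :
    ∀ v ∈ 𝔪', (∀ w ∈ 𝔥, ⁅v, w⁆ = 0) → v = 0 :=
  eq_zero_of_centralizes_h_general B hBsymm hBpos hBinv 𝔨 h𝔨 𝔥 h𝔥ideal 𝔪' h𝔪' h𝔪'irr h𝔥notideal
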